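/- For every prime p > 2 and every m ≥ 1 with k > m, there exist primes q₀ ≠ p and q₁ ≠ p such that p^k can be written as a non-negative integer combination a·q₀ + b·q₁ with a, b ≥ 1, while p^m cannot be written as c·q₀ + d·q₁ for any natural numbers c, d. -/
import Mathlib


theorem two_primes_combination (p m k : ℕ) (hp : p.Prime) (hp2 : 2 < p)
    (hm : 1 ≤ m) (hmk : m < k) :
    ∃ q₀ q₁ : ℕ, q₀.Prime ∧ q₁.Prime ∧ q₀ ≠ p ∧ q₁ ≠ p ∧
      (∃ a b : ℕ, 1 ≤ a ∧ 1 ≤ b ∧ p ^ k = a * q₀ + b * q₁) ∧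
      (∀ c d : ℕ, p ^ m ≠ c * q₀ + d * q₁) := by
  have hpm_pos : 0 < p ^ m := pow_pos hp.pos m
  obtain ⟨q₀, hq₀, hq₀gt, hq₀le⟩ :=
    Nat.exists_prime_lt_and_le_two_mul (p ^ m) hpm_pos.ne'
  have hk1 : p ^ (m + 1) ≤ p ^ k := Nat.pow_le_pow_right hp.pos hmk
  have h3 : 3 * p ^ m ≤ p ^ (m + 1) := by
    rw [pow_succ, mul_comm]
    exact Nat.mul_le_mul_left _ hp2
  have hppm : p ≤ p ^ m := by
    calc p = p ^ 1 := (pow_one p).symm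
    _ ≤ p ^ m := Nat.pow_le_pow_right hp.pos hm
  have hq₀lt : q₀ < p ^ k := by omega
  have hgap : 2 ≤ p ^ k - q₀ := by omega
  have hq₀p : q₀ ≠ p := by omega
  obtain ⟨q₁, hq₁, hq₁dvd⟩ := Nat.exists_prime_and_dvd (n := p ^ k - q₀) (by omega)
  have hq₁p : q₁ ≠ p := by
    intro h
    have h1 : q₁ ∣ p ^ k := by rw [h]; exact dvd_pow_self _ (by omega)
    have hdvd : q₁ ∣ q₀ := by
      have := Nat.dvd_sub h1 hq₁dvd
      rwa [Nat.sub_sub_self hq₀lt.le] at this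
    have := (Nat.prime_dvd_prime_iff_eq hq₁ hq₀).mp hdvd
    omega
  obtain ⟨b, hb⟩ := hq₁dvd
  refine ⟨q₀, q₁, hq₀, hq₁, hq₀p, hq₁p, ⟨1, b, le_refl 1, ?_, ?_⟩, ?_⟩
  · rcases Nat.eq_zero_or_pos b with h | h
    · rw [h, mul_zero] at hb; omega
    · exact h
  · rw [one_mul, mul_comm b q₁]; omega
  · intro c d h
    rcases Nat.eq_zero_or_pos c with hc | hc
    · rw [hc, zero_mul, zero_add] at h
      rcases Nat.eq_zero_or_pos d with hd | hd
      · rw [hd, zero_mul] at h; omega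
      · have hdq : q₁ ∣ p ^ m := h ▸ Dvd.intro_left d rfl
        have := (Nat.prime_dvd_prime_iff_eq hq₁ hp).mp (hq₁.dvd_of_dvd_pow hdq)
        exact hq₁p this
    · have hle : q₀ ≤ c * q₀ := Nat.le_mul_of_pos_left _ hc
      omega
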